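/- arXiv:1407.3395 — 2 statements merged into one kernel-verified Lean document; each statement's English description precedes it below -/
import Mathlib

section
/- There exists a finite constant c > 0 (depending only on α and L) such that for all v₁, v₂ with 1/α < v₁ ≤ v₂ < 1 one has Σ_{l=0}^L |a_l| · (∫_{−2L}^{L} |(l−u)_+^{v₂−1/α} − (l−u)_+^{v₁−1/α}|^α du)^{1/α} ≤ c (v₂ − v₁). -/
/-!
For `0 < x ≤ R` with `R ≥ 1` and `0 ≤ κ₁ ≤ κ₂ ≤ 1`, the convexity of `exp` gives
`|x^κ₂ - x^κ₁| ≤ (κ₂ - κ₁) |log x| R`, and `|log x| ≲ x^(-ε)` on `(0, R]`, so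
`|x^κ₂ - x^κ₁| ≲ (κ₂ - κ₁) x^(-ε)`. With `ε = 1/(2α)` the `α`-th power of each integrand is
dominated by `(κ₂ - κ₁)^α` times the integrable weight `(l - u)_+^(-1/2)`; hence each
`L^α` norm, and the finite sum of them, is `O(v₂ - v₁)`.
-/

open MeasureTheory

/-- `(x)_+^κ = x^κ` if `x > 0`, and `0` otherwise. -/
noncomputable def posPow (x κ : ℝ) : ℝ := if 0 < x then x ^ κ else 0

open Real Set

namespace Real

lemma exp_sub_exp_le_mul_exp (a b : ℝ) : exp b - exp a ≤ (b - a) * exp b := by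
  have h := mul_le_mul_of_nonneg_right (add_one_le_exp (a - b)) (exp_pos b).le
  rw [← exp_add, sub_add_cancel] at h
  linarith

lemma abs_rpow_sub_rpow_le {x a b : ℝ} (hx : 0 < x) (hab : a ≤ b) :
    |x ^ b - x ^ a| ≤ (b - a) * |log x| * max (x ^ a) (x ^ b) := by
  simp only [rpow_def_of_pos hx]
  set P := exp (log x * a)
  set Q := exp (log x * b)
  have hup : Q - P ≤ log x * (b - a) * Q := by
    linarith [exp_sub_exp_le_mul_exp (log x * a) (log x * b)]
  have hdown : P - Q ≤ -log x * (b - a) * P := by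
    linarith [exp_sub_exp_le_mul_exp (log x * b) (log x * a)]
  rw [abs_sub_le_iff]
  constructor
  · calc Q - P ≤ log x * (b - a) * Q := hup
      _ ≤ |log x| * (b - a) * max P Q := by gcongr; exacts [le_abs_self _, le_max_right _ _]
      _ = _ := by ring
  · calc P - Q ≤ -log x * (b - a) * P := hdown
      _ ≤ |log x| * (b - a) * max P Q := by gcongr; exacts [neg_le_abs _, le_max_left _ _]
      _ = _ := by ring

lemma abs_log_le_rpow_add_rpow_neg_div {x ε : ℝ} (hx : 0 < x) (hε : 0 < ε) :
    |log x| ≤ (x ^ ε + x ^ (-ε)) / ε := by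
  have hpos := log_le_rpow_div hx.le hε
  have hneg := log_le_rpow_div (inv_nonneg.2 hx.le) hε
  rw [log_inv, inv_rpow hx.le, ← rpow_neg hx.le] at hneg
  have h1 : 0 ≤ x ^ ε / ε := by positivity
  have h2 : 0 ≤ x ^ (-ε) / ε := by positivity
  rw [abs_le, add_div]
  constructor <;> linarith

lemma abs_log_le_mul_rpow_neg {x R ε : ℝ} (hx : 0 < x) (hxR : x ≤ R) (hε : 0 < ε) :
    |log x| ≤ (R ^ (2 * ε) + 1) / ε * x ^ (-ε) := by
  have hsplit : x ^ ε = x ^ (2 * ε) * x ^ (-ε) := by rw [← rpow_add hx]; ring_nf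
  calc |log x| ≤ (x ^ ε + x ^ (-ε)) / ε := abs_log_le_rpow_add_rpow_neg_div hx hε
    _ ≤ (R ^ (2 * ε) * x ^ (-ε) + x ^ (-ε)) / ε := by
        rw [hsplit]; gcongr
    _ = _ := by ring

lemma abs_rpow_sub_rpow_le_mul_rpow_neg {x R ε a b : ℝ} (hx : 0 < x) (hxR : x ≤ R) (hR : 1 ≤ R)
    (hε : 0 < ε) (ha : 0 ≤ a) (hab : a ≤ b) (hb : b ≤ 1) :
    |x ^ b - x ^ a| ≤ R * (R ^ (2 * ε) + 1) / ε * (b - a) * x ^ (-ε) := by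
  have hpow_le : ∀ κ : ℝ, 0 ≤ κ → κ ≤ 1 → x ^ κ ≤ R := fun κ h0 h1 =>
    (rpow_le_rpow hx.le hxR h0).trans ((rpow_le_rpow_of_exponent_le hR h1).trans_eq (rpow_one R))
  calc |x ^ b - x ^ a| ≤ (b - a) * |log x| * max (x ^ a) (x ^ b) := abs_rpow_sub_rpow_le hx hab
    _ ≤ (b - a) * ((R ^ (2 * ε) + 1) / ε * x ^ (-ε)) * R := by
        gcongr
        · exact abs_log_le_mul_rpow_neg hx hxR hε
        · exact max_le (hpow_le a ha (hab.trans hb)) (hpow_le b (ha.trans hab) hb)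
    _ = _ := by ring

end Real

lemma posPow_nonneg (x κ : ℝ) : 0 ≤ posPow x κ := by
  unfold posPow
  split_ifs with hx
  exacts [rpow_nonneg hx.le _, le_rfl]

lemma posPow_rpow (x κ : ℝ) {α : ℝ} (hα : α ≠ 0) : posPow x κ ^ α = posPow x (κ * α) := by
  unfold posPow
  split_ifs with hx
  exacts [(rpow_mul hx.le _ _).symm, zero_rpow hα]

lemma intervalIntegrable_posPow {r : ℝ} (hr : -1 < r) (a b : ℝ) :
    IntervalIntegrable (fun x => posPow x r) volume a b := by
  have hind : (fun x => posPow x r) = (Ioi 0).indicator (fun x => x ^ r) := by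
    ext x
    simp [posPow, indicator]
  rw [hind, intervalIntegrable_iff]
  exact (intervalIntegrable_iff.1 (intervalIntegral.intervalIntegrable_rpow' hr)).indicator
    measurableSet_Ioi

lemma abs_posPow_sub_posPow_le {y R ε a b : ℝ} (hyR : y ≤ R) (hR : 1 ≤ R) (hε : 0 < ε)
    (ha : 0 ≤ a) (hab : a ≤ b) (hb : b ≤ 1) :
    |posPow y b - posPow y a| ≤ R * (R ^ (2 * ε) + 1) / ε * (b - a) * posPow y (-ε) := by
  unfold posPow
  split_ifs with hy
  · exact abs_rpow_sub_rpow_le_mul_rpow_neg hy hyR hR hε ha hab hb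
  · simp

lemma exists_integral_abs_posPow_sub_posPow_rpow_le {α : ℝ} (hα : 0 < α) (s : ℝ) {a b : ℝ}
    (hab : a ≤ b) :
    ∃ C, 0 ≤ C ∧ ∀ κ₁ κ₂ : ℝ, 0 ≤ κ₁ → κ₁ ≤ κ₂ → κ₂ ≤ 1 →
      (∫ u in a..b, |posPow (s - u) κ₂ - posPow (s - u) κ₁| ^ α) ^ (1 / α)
        ≤ C * (κ₂ - κ₁) := by
  set ε := 1 / (2 * α)
  set R := max 1 (s - a)
  set M := R * (R ^ (2 * ε) + 1) / ε
  have hR : 1 ≤ R := le_max_left _ _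
  have hM : 0 ≤ M := by positivity
  have hweight : IntervalIntegrable (fun u => posPow (s - u) (-1 / 2)) volume a b := by
    simpa using (intervalIntegrable_posPow (by norm_num) (s - a) (s - b)).comp_sub_left s
  set K := ∫ u in a..b, posPow (s - u) (-1 / 2)
  have hK : 0 ≤ K := intervalIntegral.integral_nonneg hab fun u _ => posPow_nonneg _ _
  refine ⟨M * K ^ (1 / α), by positivity, fun κ₁ κ₂ h₁ h₁₂ h₂ => ?_⟩
  have hMδ : 0 ≤ M * (κ₂ - κ₁) := mul_nonneg hM (sub_nonneg.2 h₁₂)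
  -- `ε = 1 / (2α)` turns the weight `posPow (s - u) (-ε) ^ α` into the integrable
  -- `(s - u)_+^(-1/2)`
  have hpointwise : ∀ u ∈ Ioc a b, |posPow (s - u) κ₂ - posPow (s - u) κ₁| ^ α
      ≤ (M * (κ₂ - κ₁)) ^ α * posPow (s - u) (-1 / 2) := by
    intro u hu
    have hsu : s - u ≤ R := le_max_of_le_right (by linarith [hu.1])
    calc |posPow (s - u) κ₂ - posPow (s - u) κ₁| ^ α
        ≤ (M * (κ₂ - κ₁) * posPow (s - u) (-ε)) ^ α :=
          rpow_le_rpow (abs_nonneg _)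
            (abs_posPow_sub_posPow_le hsu hR (by positivity) h₁ h₁₂ h₂) hα.le
      _ = (M * (κ₂ - κ₁)) ^ α * posPow (s - u) (-1 / 2) := by
          rw [mul_rpow hMδ (posPow_nonneg _ _), posPow_rpow _ _ hα.ne']
          congr 2
          simp only [ε]
          field_simp
  -- the integrand is nonnegative, so no integrability of it is needed
  have hintegral : (∫ u in a..b, |posPow (s - u) κ₂ - posPow (s - u) κ₁| ^ α)
      ≤ (M * (κ₂ - κ₁)) ^ α * K := by
    simp only [K]
    rw [intervalIntegral.integral_of_le hab, intervalIntegral.integral_of_le hab,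
      ← integral_const_mul]
    refine integral_mono_of_nonneg (ae_of_all _ fun u => by positivity)
      (hweight.1.const_mul _) ?_
    filter_upwards [ae_restrict_mem measurableSet_Ioc] with u hu
    exact hpointwise u hu
  calc (∫ u in a..b, |posPow (s - u) κ₂ - posPow (s - u) κ₁| ^ α) ^ (1 / α)
      ≤ ((M * (κ₂ - κ₁)) ^ α * K) ^ (1 / α) :=
        rpow_le_rpow (intervalIntegral.integral_nonneg hab fun u _ => by positivity)
          hintegral (by positivity)
    _ = M * (κ₂ - κ₁) * K ^ (1 / α) := by
        rw [mul_rpow (by positivity) hK, ← rpow_mul hMδ, mul_one_div_cancel hα.ne', rpow_one]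
    _ = M * K ^ (1 / α) * (κ₂ - κ₁) := by ring

theorem lipschitz_bound_on_compact_part_general (α : ℝ) (hα : α ∈ Set.Ioo (1 : ℝ) 2)
    (L : ℕ) :
    ∃ c > (0 : ℝ), ∀ v₁ v₂ : ℝ, 1 / α < v₁ → v₁ ≤ v₂ → v₂ < 1 →
      ∑ l ∈ Finset.range (L + 1), |(-1 : ℝ) ^ (L - l) * (L.choose l : ℝ)| *
        (∫ u in (-(2 * (L : ℝ)))..(L : ℝ),
          |posPow ((l : ℝ) - u) (v₂ - 1 / α) -
            posPow ((l : ℝ) - u) (v₁ - 1 / α)| ^ α) ^ (1 / α)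
      ≤ c * (v₂ - v₁) := by
  have hα₀ : 0 < α := zero_lt_one.trans hα.1
  choose C hC₀ hC using fun l : ℕ =>
    exists_integral_abs_posPow_sub_posPow_rpow_le hα₀ l (a := -(2 * (L : ℝ))) (b := L)
      (by linarith [(L.cast_nonneg : (0 : ℝ) ≤ L)])
  set absCoeff : ℕ → ℝ := fun l => |(-1 : ℝ) ^ (L - l) * (L.choose l : ℝ)|
  refine ⟨∑ l ∈ Finset.range (L + 1), absCoeff l * C l + 1,
    add_pos_of_nonneg_of_pos (Finset.sum_nonneg fun l _ => mul_nonneg (abs_nonneg _) (hC₀ l))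
      one_pos,
    fun v₁ v₂ h₁ h₁₂ h₂ => ?_⟩
  have hinv : 0 < 1 / α := by positivity
  calc _ ≤ ∑ l ∈ Finset.range (L + 1), absCoeff l * (C l * (v₂ - v₁)) := by
        refine Finset.sum_le_sum fun l _ => mul_le_mul_of_nonneg_left ?_ (abs_nonneg _)
        refine (hC l (v₁ - 1 / α) (v₂ - 1 / α) ?_ ?_ ?_).trans_eq (by ring) <;> linarith
    _ = (∑ l ∈ Finset.range (L + 1), absCoeff l * C l) * (v₂ - v₁) := by
        rw [Finset.sum_mul]
        simp only [mul_assoc]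
    _ ≤ (∑ l ∈ Finset.range (L + 1), absCoeff l * C l + 1) * (v₂ - v₁) := by
        gcongr
        linarith

/-- There is a finite constant `c > 0` (depending only on `α, L`)
such that for all `1/α < v₁ ≤ v₂ < 1`,
`Σ_{l=0}^L |a_l| (∫_{−2L}^{L} |(l−u)_+^{v₂−1/α} − (l−u)_+^{v₁−1/α}|^α du)^{1/α}
  ≤ c (v₂ − v₁)`. -/
theorem lipschitz_bound_on_compact_part (α : ℝ) (hα : α ∈ Set.Ioo (1 : ℝ) 2)
    (L : ℕ) (hL : 2 ≤ L) :
    ∃ c > (0 : ℝ), ∀ v₁ v₂ : ℝ, 1 / α < v₁ → v₁ ≤ v₂ → v₂ < 1 →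
      ∑ l ∈ Finset.range (L + 1), |(-1 : ℝ) ^ (L - l) * (L.choose l : ℝ)| *
        (∫ u in (-(2 * (L : ℝ)))..(L : ℝ),
          |posPow ((l : ℝ) - u) (v₂ - 1 / α) -
            posPow ((l : ℝ) - u) (v₁ - 1 / α)| ^ α) ^ (1 / α)
      ≤ c * (v₂ - v₁) :=
  lipschitz_bound_on_compact_part_general α hα L
end

section
/- There exists a finite constant c > 0 (depending only on α and L) such that for every δ ∈ (0,1), every function H : [0,1] → (1/α,1), every integer N ≥ L and every integer k with 0 ≤ k ≤ N − L, setting e_N = ⌊N^δ⌋, one has N^{−(H(k/N) − 1/α)} · (∫_{−∞}^{(k − e_N + L)/N} |Φ_α(N s − k, H(k/N))|^α ds)^{1/α} ≤ c · N^{−(1−δ) H(k/N) − δ L}. -/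
open MeasureTheory

/-- `Φ_α(u,v) = Σ_{l=0}^L a_l (l−u)_+^{v−1/α}` with `a_l = (−1)^{L−l}·(L choose l)`. -/
noncomputable def Phi (α : ℝ) (L : ℕ) (u v : ℝ) : ℝ :=
  ∑ l ∈ Finset.range (L + 1),
    ((-1 : ℝ) ^ (L - l) * (L.choose l : ℝ)) * posPow ((l : ℝ) - u) (v - 1 / α)

/-! For `u < 0`, `Φ_α(u, v)` is the `L`-th forward difference of `t ↦ t ^ κ`, `κ = v - 1/α`,
at `-u`; by the mean value theorem it is `O(|u| ^ (κ - L))`, while for `u ≥ -1` it is bounded.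
Hence `|Φ_α(L - t, v)| ≤ C t ^ (κ - L)` for `t ≥ 1`. The substitution `t = L + k - N s` turns the
integral into `N⁻¹ ∫_{e_N}^∞ |Φ_α(L - t, v)| ^ α dt ≤ C ^ α N⁻¹ e_N ^ (α (v - L))`, and
`N ^ δ ≤ 2 e_N` converts the power of `e_N` into the claimed power of `N`. -/

open Real Set Finset fwdDiff

theorem hasDerivAt_fwdDiff_iter {E : Type*} [NormedAddCommGroup E] [NormedSpace ℝ E]
    {f f' : ℝ → E} {a h : ℝ} (hh : 0 ≤ h) (hf : ∀ x, a < x → HasDerivAt f (f' x) x) (n : ℕ)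
    {x : ℝ} (hx : a < x) : HasDerivAt (Δ_[h] ^[n] f) (Δ_[h] ^[n] f' x) x := by
  induction n generalizing x with
  | zero => exact hf x hx
  | succ n ih =>
    rw [Function.iterate_succ_apply', Function.iterate_succ']
    exact ((ih (by linarith)).comp_add_const x h).sub (ih hx)

theorem abs_fwdDiff_iter_rpow_le (n : ℕ) {κ : ℝ} (hκ : κ ≤ n) {x : ℝ} (hx : 0 < x) :
    |Δ_[1] ^[n] (fun t => t ^ κ) x| ≤ (∏ i ∈ range n, |κ - i|) * x ^ (κ - n) := by
  induction n generalizing κ x with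
  | zero => simp [abs_of_nonneg (rpow_nonneg hx.le κ)]
  | succ n ih =>
    have hderiv : ∀ y, 0 < y →
        HasDerivAt (fun t : ℝ => t ^ κ) ((κ • fun t : ℝ => t ^ (κ - 1)) y) y :=
      fun y hy => by simpa using hasDerivAt_rpow_const (p := κ) (Or.inl hy.ne')
    obtain ⟨ξ, ⟨hxξ, -⟩, hξ⟩ := exists_hasDerivAt_eq_slope _ _ (lt_add_one x)
      (fun y hy => (hasDerivAt_fwdDiff_iter zero_le_one hderiv n
        (hx.trans_le hy.1)).continuousAt.continuousWithinAt)
      (fun y hy => hasDerivAt_fwdDiff_iter zero_le_one hderiv n (hx.trans hy.1))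
    have hstep :
        Δ_[1] ^[n + 1] (fun t : ℝ => t ^ κ) x = κ * Δ_[1] ^[n] (fun t => t ^ (κ - 1)) ξ := by
      rw [fwdDiff_iter_const_smul, Pi.smul_apply, smul_eq_mul, add_sub_cancel_left,
        div_one] at hξ
      rw [Function.iterate_succ_apply', fwdDiff, ← hξ]
    have hmono : ξ ^ (κ - 1 - n) ≤ x ^ (κ - 1 - n) :=
      rpow_le_rpow_of_nonpos hx hxξ.le (by push_cast at hκ; linarith)
    rw [hstep, abs_mul, prod_range_succ', Nat.cast_zero, sub_zero, mul_comm _ |κ|, mul_assoc,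
      Nat.cast_succ, show κ - (n + 1 : ℝ) = κ - 1 - n by ring]
    gcongr
    calc |Δ_[1] ^[n] (fun t => t ^ (κ - 1)) ξ|
        ≤ (∏ i ∈ range n, |κ - 1 - i|) * ξ ^ (κ - 1 - n) :=
          ih (by push_cast at hκ; linarith) (hx.trans hxξ)
      _ ≤ (∏ i ∈ range n, |κ - ((i + 1 : ℕ) : ℝ)|) * x ^ (κ - 1 - n) := by
          have hfac : ∀ i : ℕ, |κ - ((i + 1 : ℕ) : ℝ)| = |κ - 1 - i| := fun i => by
            rw [Nat.cast_succ, sub_add_eq_sub_sub_swap]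
          simp only [hfac]
          exact mul_le_mul_of_nonneg_left hmono (prod_nonneg fun i _ => abs_nonneg _)

theorem Phi_eq_fwdDiff_iter {α v u : ℝ} (L : ℕ) (hu : u < 0) :
    Phi α L u v = Δ_[1] ^[L] (fun t => t ^ (v - 1 / α)) (-u) := by
  rw [fwdDiff_iter_eq_sum_shift]
  refine sum_congr rfl fun l _ => ?_
  have hl : 0 < (l : ℝ) - u := by linarith [l.cast_nonneg (α := ℝ)]
  rw [posPow, if_pos hl, zsmul_eq_mul, nsmul_one, neg_add_eq_sub]
  push_cast
  rfl

theorem abs_posPow_le {x κ b : ℝ} (hx : x ≤ b) (hb : 1 ≤ b) (hκ₀ : 0 ≤ κ) (hκ₁ : κ ≤ 1) :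
    |posPow x κ| ≤ b := by
  unfold posPow
  split_ifs with h
  · rw [abs_of_nonneg (rpow_nonneg h.le κ)]
    calc x ^ κ ≤ b ^ κ := rpow_le_rpow h.le hx hκ₀
      _ ≤ b := rpow_le_self_of_one_le hb hκ₁
  · simpa using zero_le_one.trans hb

theorem abs_Phi_le_of_neg_one_le {α v u : ℝ} (L : ℕ) (hu : -1 ≤ u) (hκ₀ : 0 ≤ v - 1 / α)
    (hκ₁ : v - 1 / α ≤ 1) : |Phi α L u v| ≤ 2 ^ L * (L + 1) := by
  calc |Phi α L u v|
      ≤ ∑ l ∈ range (L + 1), |(-1 : ℝ) ^ (L - l) * L.choose l * posPow (l - u) (v - 1 / α)| :=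
        abs_sum_le_sum_abs _ _
    _ ≤ ∑ l ∈ range (L + 1), (L.choose l : ℝ) * (L + 1) := by
        refine sum_le_sum fun l hl => ?_
        have hlL : (l : ℝ) ≤ L := by exact_mod_cast Nat.lt_succ_iff.mp (mem_range.mp hl)
        rw [abs_mul, abs_mul, abs_pow, abs_neg, abs_one, one_pow, one_mul, Nat.abs_cast]
        exact mul_le_mul_of_nonneg_left
          (abs_posPow_le (by linarith) (by linarith [L.cast_nonneg (α := ℝ)]) hκ₀ hκ₁)
          (Nat.cast_nonneg _)
    _ = 2 ^ L * (L + 1) := by rw [← sum_mul, ← Nat.cast_sum, Nat.sum_range_choose]; push_cast; rfl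

noncomputable def phiConst (L : ℕ) : ℝ := 2 ^ L * (L + 1) ^ (L + 1) * L.factorial

theorem phiConst_pos (L : ℕ) : 0 < phiConst L := by
  unfold phiConst; positivity

theorem abs_Phi_natCast_sub_le {α v t : ℝ} {L : ℕ} (hL : 1 ≤ L) (hκ₀ : 0 ≤ v - 1 / α)
    (hκ₁ : v - 1 / α ≤ 1) (ht : 1 ≤ t) :
    |Phi α L (L - t) v| ≤ phiConst L * t ^ (v - 1 / α - L) := by
  set κ := v - 1 / α
  have hL₁ : (1 : ℝ) ≤ L := by exact_mod_cast hL
  have hfac : (1 : ℝ) ≤ L.factorial := by exact_mod_cast L.factorial_pos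
  rcases le_or_gt t (L + 1) with hsmall | hlarge
  · have hpow : (t ^ L)⁻¹ ≤ t ^ (κ - L) := by
      rw [← rpow_natCast, ← rpow_neg (by linarith)]
      exact rpow_le_rpow_of_exponent_le ht (by linarith)
    calc |Phi α L (L - t) v| ≤ 2 ^ L * (L + 1) :=
          abs_Phi_le_of_neg_one_le L (by linarith) hκ₀ hκ₁
      _ ≤ phiConst L * (t ^ L)⁻¹ := by
          rw [le_mul_inv_iff₀ (by positivity), phiConst]
          calc 2 ^ L * (L + 1) * t ^ L ≤ 2 ^ L * (L + 1) * (L + 1) ^ L := by gcongr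
            _ = 2 ^ L * (L + 1) ^ (L + 1) * 1 := by ring
            _ ≤ 2 ^ L * (L + 1) ^ (L + 1) * L.factorial := by gcongr
      _ ≤ phiConst L * t ^ (κ - L) := by gcongr; exact (phiConst_pos L).le
  · have hΦ : Phi α L (L - t) v = Δ_[1] ^[L] (fun t => t ^ κ) (t - L) := by
      rw [Phi_eq_fwdDiff_iter L (by linarith), neg_sub]
    have hprod : ∏ i ∈ range L, |κ - i| ≤ L.factorial := by
      rw [← prod_range_add_one_eq_factorial]
      push_cast
      exact prod_le_prod (fun _ _ => abs_nonneg _)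
        fun i _ => abs_le.2 ⟨by linarith, by linarith [i.cast_nonneg (α := ℝ)]⟩
    have hshift : (t - L) ^ (κ - L) ≤ (L + 1) ^ L * t ^ (κ - L) :=
      calc (t - L) ^ (κ - L) ≤ (t / (L + 1)) ^ (κ - L) :=
            rpow_le_rpow_of_nonpos (by positivity)
              (by rw [div_le_iff₀ (by positivity)]; nlinarith) (by linarith)
        _ = (L + 1) ^ (L - κ) * t ^ (κ - L) := by
            rw [div_rpow (by linarith) (by positivity), div_eq_inv_mul, ← rpow_neg (by positivity),
              neg_sub]
        _ ≤ (L + 1) ^ L * t ^ (κ - L) := by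
            rw [← rpow_natCast]
            gcongr
            · linarith
            · linarith
    calc |Phi α L (L - t) v| ≤ (∏ i ∈ range L, |κ - i|) * (t - L) ^ (κ - L) := by
          rw [hΦ]; exact abs_fwdDiff_iter_rpow_le L (by linarith) (by linarith)
      _ ≤ L.factorial * ((L + 1) ^ L * t ^ (κ - L)) := by
          gcongr; exact rpow_nonneg (by linarith) _
      _ = ((L + 1) ^ L * L.factorial) * t ^ (κ - L) := by ring
      _ ≤ phiConst L * t ^ (κ - L) := by
          have h2 : ((L : ℝ) + 1) ^ L ≤ 2 ^ L * (L + 1) ^ (L + 1) := by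
            calc ((L : ℝ) + 1) ^ L = 1 * (L + 1) ^ L * 1 := by ring
              _ ≤ 2 ^ L * (L + 1) ^ L * (L + 1) := by
                  gcongr
                  · exact one_le_pow₀ one_le_two
                  · linarith
              _ = 2 ^ L * (L + 1) ^ (L + 1) := by ring
          unfold phiConst
          gcongr

theorem setIntegral_Iic_comp_mul_sub {g : ℝ → ℝ} {N : ℝ} (hN : 0 < N) (a b x : ℝ) :
    ∫ s in Iic ((a + b - x) / N), g (N * s - a) = N⁻¹ * ∫ t in Ici x, g (b - t) := by
  have himage : (fun t => (a + b - t) / N) '' Ici x = Iic ((a + b - x) / N) := by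
    ext s
    simp only [Set.mem_image, Set.mem_Ici, Set.mem_Iic]
    constructor
    · rintro ⟨t, ht, rfl⟩
      gcongr
    · intro hs
      refine ⟨a + b - N * s, ?_, by field_simp; ring⟩
      rw [le_div_iff₀ hN] at hs
      linarith
  have hderiv : ∀ t ∈ Ici x, HasDerivWithinAt (fun t => (a + b - t) / N) (-1 / N) (Ici x) t :=
    fun t _ => (((hasDerivAt_id t).const_sub (a + b)).div_const N).hasDerivWithinAt
  have hinj : InjOn (fun t => (a + b - t) / N) (Ici x) := fun t₁ _ t₂ _ h => by
    simp only [div_left_inj' hN.ne'] at h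
    linarith
  rw [← himage, integral_image_eq_integral_abs_deriv_smul measurableSet_Ici hderiv hinj,
    ← integral_const_mul]
  refine setIntegral_congr_fun measurableSet_Ici fun t _ => ?_
  rw [smul_eq_mul, neg_div, abs_neg, abs_of_pos (by positivity), one_div,
    mul_div_cancel₀ _ hN.ne', add_sub_assoc, add_sub_cancel_left]

theorem setIntegral_Ici_abs_Phi_rpow_le {α v x : ℝ} {L : ℕ} (hα : 1 ≤ α) (hL : 2 ≤ L)
    (hv : v ∈ Ioo (1 / α) 1) (hx : 1 ≤ x) :
    ∫ t in Ici x, |Phi α L (L - t) v| ^ α ≤ phiConst L ^ α * x ^ (α * (v - L)) := by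
  obtain ⟨hv₀, hv₁⟩ := hv
  have hα₀ : 0 < α := by linarith
  have hL₂ : (2 : ℝ) ≤ L := by exact_mod_cast hL
  set p := α * (v - 1 / α - L) with hp_def
  have hp : p + 1 = α * (v - L) := by rw [hp_def]; field_simp; ring
  have hp₁ : 1 ≤ -(p + 1) := by rw [hp]; nlinarith
  have hpoint : ∀ t ∈ Ici x, |Phi α L (L - t) v| ^ α ≤ phiConst L ^ α * t ^ p := fun t ht => by
    have ht₁ : 1 ≤ t := hx.trans ht
    calc |Phi α L (L - t) v| ^ α ≤ (phiConst L * t ^ (v - 1 / α - L)) ^ α := by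
          gcongr
          refine abs_Phi_natCast_sub_le (by omega) ?_ ?_ ht₁
          · linarith
          · linarith [one_div_pos.mpr hα₀]
      _ = phiConst L ^ α * t ^ p := by
          rw [mul_rpow (phiConst_pos L).le (rpow_nonneg (by linarith) _), ← rpow_mul (by linarith),
            mul_comm _ α]
  have hint : IntegrableOn (fun t => t ^ p) (Ici x) :=
    (integrableOn_Ici_iff_integrableOn_Ioi).mpr
      (integrableOn_Ioi_rpow_of_lt (by linarith) (by linarith))
  calc ∫ t in Ici x, |Phi α L (L - t) v| ^ α ≤ ∫ t in Ici x, phiConst L ^ α * t ^ p :=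
        setIntegral_mono_of_nonneg (fun _ _ => by positivity) hpoint (hint.const_mul _)
    _ = phiConst L ^ α * (x ^ (p + 1) / -(p + 1)) := by
        rw [integral_const_mul, integral_Ici_eq_integral_Ioi,
          integral_Ioi_rpow_of_lt (by linarith : p < -1) (by linarith : (0 : ℝ) < x), neg_div,
          div_neg]
    _ ≤ phiConst L ^ α * x ^ (α * (v - L)) := by
        rw [← hp]
        exact mul_le_mul_of_nonneg_left (div_le_self (rpow_nonneg (by linarith) _) hp₁)
          (rpow_nonneg (phiConst_pos L).le _)

theorem natFloor_rpow_le {y q : ℝ} (hy : 1 ≤ y) (hq : q ≤ 0) :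
    (⌊y⌋₊ : ℝ) ^ q ≤ 2 ^ (-q) * y ^ q := by
  have hfloor : (1 : ℝ) ≤ ⌊y⌋₊ := by exact_mod_cast Nat.le_floor (by exact_mod_cast hy)
  have hy₂ : y ≤ 2 * ⌊y⌋₊ := by linarith [Nat.lt_floor_add_one y]
  calc (⌊y⌋₊ : ℝ) ^ q = 2 ^ (-q) * (2 * ⌊y⌋₊) ^ q := by
        rw [mul_rpow zero_le_two (by linarith), ← mul_assoc, ← rpow_add two_pos, neg_add_cancel,
          rpow_zero, one_mul]
    _ ≤ 2 ^ (-q) * y ^ q :=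
        mul_le_mul_of_nonneg_left (rpow_le_rpow_of_nonpos (by linarith) hy₂ hq) (by positivity)

theorem truncated_scale_parameter_le {α v N e k : ℝ} {L : ℕ} (hα : 1 ≤ α) (hL : 2 ≤ L)
    (hv : v ∈ Ioo (1 / α) 1) (hN : 0 < N) (he : 1 ≤ e) :
    N ^ (-(v - 1 / α)) * (∫ s in Iic ((k - e + L) / N), |Phi α L (N * s - k) v| ^ α) ^ (1 / α)
      ≤ phiConst L * N ^ (-v) * e ^ (v - L) := by
  have hα₀ : 0 < α := by linarith
  have hC := (phiConst_pos L).le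
  have hsubst := setIntegral_Iic_comp_mul_sub (g := fun u => |Phi α L u v| ^ α) hN k L e
  rw [add_sub_right_comm] at hsubst
  rw [hsubst]
  calc N ^ (-(v - 1 / α)) * (N⁻¹ * ∫ t in Ici e, |Phi α L (L - t) v| ^ α) ^ (1 / α)
      ≤ N ^ (-(v - 1 / α)) * (N⁻¹ * (phiConst L ^ α * e ^ (α * (v - L)))) ^ (1 / α) := by
        gcongr
        exact setIntegral_Ici_abs_Phi_rpow_le hα hL hv he
    _ = phiConst L * N ^ (-v) * e ^ (v - L) := by
        rw [mul_rpow (by positivity) (mul_nonneg (rpow_nonneg hC _) (by positivity)),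
          mul_rpow (rpow_nonneg hC _) (by positivity), ← rpow_mul hC, ← rpow_mul (by positivity),
          inv_rpow hN.le, ← rpow_neg hN.le, mul_one_div_cancel hα₀.ne', rpow_one,
          show α * (v - L) * (1 / α) = v - L by field_simp,
          show -v = -(v - 1 / α) + -(1 / α) by ring, rpow_add hN]
        ring

/-- There is a finite constant `c > 0` (depending only on `α, L`)
such that for every `δ ∈ (0,1)`, every `H : [0,1] → (1/α,1)`, every `N ≥ L` and
every `0 ≤ k ≤ N − L`, setting `e_N = ⌊N^δ⌋`, the scale parameter
`N^{−(H(k/N)−1/α)}·(∫_{−∞}^{(k−e_N+L)/N} |Φ_α(Ns−k, H(k/N))|^α ds)^{1/α}` of the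
truncated variation `d̃_{N,k}^{2,δ}` is at most `c·N^{−(1−δ)H(k/N)−δL}`. -/
theorem truncated_scale_parameter_bound (α : ℝ) (hα : α ∈ Set.Ioo (1 : ℝ) 2)
    (L : ℕ) (hL : 2 ≤ L) :
    ∃ c > (0 : ℝ), ∀ δ ∈ Set.Ioo (0 : ℝ) 1, ∀ H : ℝ → ℝ,
      (∀ t ∈ Set.Icc (0 : ℝ) 1, H t ∈ Set.Ioo (1 / α) 1) →
      ∀ N : ℕ, L ≤ N → ∀ k : ℕ, k + L ≤ N →
        (N : ℝ) ^ (-(H ((k : ℝ) / N) - 1 / α)) *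
          (∫ s in Set.Iic (((k : ℝ) - (⌊(N : ℝ) ^ δ⌋₊ : ℝ) + (L : ℝ)) / N),
            |Phi α L ((N : ℝ) * s - (k : ℝ)) (H ((k : ℝ) / N))| ^ α) ^ (1 / α)
        ≤ c * (N : ℝ) ^ (-(1 - δ) * H ((k : ℝ) / N) - δ * (L : ℝ)) := by
  obtain ⟨hα₁, -⟩ := hα
  refine ⟨phiConst L * 2 ^ L, mul_pos (phiConst_pos L) (by positivity), ?_⟩
  rintro δ ⟨hδ₀, -⟩ H hH N - k hkN
  have hN₁ : (1 : ℝ) ≤ N := by exact_mod_cast (by omega : 1 ≤ N)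
  have hkN' : (k : ℝ) + L ≤ N := by exact_mod_cast hkN
  have hL₂ : (2 : ℝ) ≤ L := by exact_mod_cast hL
  obtain ⟨hv₀, hv₁⟩ := hH (k / N) ⟨by positivity, by rw [div_le_one (by linarith)]; linarith⟩
  set v := H (k / N)
  have hv : 0 < v := (one_div_pos.mpr (by linarith)).trans hv₀
  have hNδ : 1 ≤ (N : ℝ) ^ δ := one_le_rpow hN₁ hδ₀.le
  have he : (1 : ℝ) ≤ ⌊(N : ℝ) ^ δ⌋₊ := by exact_mod_cast Nat.le_floor (by exact_mod_cast hNδ)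
  have h2 : (2 : ℝ) ^ (-(v - L)) ≤ 2 ^ L := by
    rw [← rpow_natCast]
    exact rpow_le_rpow_of_exponent_le one_le_two (by linarith)
  calc _ ≤ phiConst L * (N : ℝ) ^ (-v) * (⌊(N : ℝ) ^ δ⌋₊ : ℝ) ^ (v - L) :=
        truncated_scale_parameter_le hα₁.le hL ⟨hv₀, hv₁⟩ (by linarith) he
    _ ≤ phiConst L * (N : ℝ) ^ (-v) * (2 ^ L * ((N : ℝ) ^ δ) ^ (v - L)) := by
        gcongr
        · exact mul_nonneg (phiConst_pos L).le (rpow_nonneg (by linarith) _)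
        · exact (natFloor_rpow_le hNδ (by linarith)).trans
            (mul_le_mul_of_nonneg_right h2 (by positivity))
    _ = phiConst L * 2 ^ L * (N : ℝ) ^ (-(1 - δ) * v - δ * L) := by
        rw [← rpow_mul (by linarith), show -(1 - δ) * v - δ * L = -v + δ * (v - L) by ring,
          rpow_add (by linarith)]
        ring
end
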